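/- Let t_1, …, t_k (k ≥ 1) be a sequence in which each t_j is either an integer constant or a variable from a finite set V (variables may occur several times), let S be a finite nonempty set of integers, and let c be the product of the integer constants among the t_j (c = 1 if there are none). Then there exists an assignment ν : V → S such that the product obtained from t_1 × … × t_k by replacing each variable occurrence of x by ν(x) is strictly positive if and only if one of the following holds: (i) all t_j are constants and c > 0; (ii) c > 0 and S contains a positive integer; (iii) c > 0, S contains a negative integer, and the total number of variable occurrences among the t_j is even; (iv) c < 0, S contains a negative integer, and the total number of variable occurrences among the t_j is odd; or (v) c < 0, S contains both a positive and a negative integer, and some variable of V has an odd number of occurrences among the t_j. -/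

import Mathlib

/-!
Split the product as `c` times the product `P` of the values of the variable occurrences; the
question becomes when `P` can be made positive (for `c > 0`) or negative (for `c < 0`). A constant
assignment `s` gives `P = s ^ n`, `n` the number of occurrences; if `S` has both signs, sending one
variable of odd multiplicity to a negative value and all others to a positive one makes `P`
negative. Conversely, `P = ∏ x, ν x ^ (multiplicity of x)` is nonnegative when all multiplicities
are even, and if no value is positive then all are negative (as `P ≠ 0`) and the sign of `P` is
the parity of `n`.
-/

def tval (ν : ℕ → ℤ) : ℤ ⊕ ℕ → ℤ
  | Sum.inl z => z
  | Sum.inr x => ν x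

theorem prod_map_tval (ts : List (ℤ ⊕ ℕ)) (ν : ℕ → ℤ) :
    (ts.map (tval ν)).prod =
      (ts.filterMap Sum.getLeft?).prod * ((ts.filterMap Sum.getRight?).map ν).prod := by
  induction ts with
  | nil => simp
  | cons t ts ih => cases t <;> simp [tval, ih, List.filterMap_cons, mul_assoc, mul_left_comm]

namespace List

variable {α β R : Type*}

theorem length_filterMap_getRight? (l : List (α ⊕ β)) :
    (l.filterMap Sum.getRight?).length = l.countP (fun t => t.isRight) := by
  rw [length_filterMap_eq_countP]
  congr
  funext t
  cases t <;> rfl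

theorem filterMap_getRight?_eq_nil_iff {l : List (α ⊕ β)} :
    l.filterMap Sum.getRight? = [] ↔ ∀ t ∈ l, t.isLeft := by
  simp only [filterMap_eq_nil_iff, Sum.getRight?_eq_none_iff]

theorem count_filterMap_getRight? [DecidableEq α] [DecidableEq β] (l : List (α ⊕ β)) (b : β) :
    (l.filterMap Sum.getRight?).count b = l.count (Sum.inr b) := by
  rw [count_filterMap, count_eq_countP]
  congr
  funext t
  cases t <;> rfl

theorem forall_neg_of_prod_ne_zero_of_forall_nonpos {M₀ : Type*} [MonoidWithZero M₀]
    [PartialOrder M₀] {l : List M₀} (h : l.prod ≠ 0) (hl : ∀ a ∈ l, a ≤ 0) : ∀ a ∈ l, a < 0 :=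
  fun a ha => (hl a ha).lt_of_ne fun h0 => h (prod_eq_zero (h0 ▸ ha))

variable [CommRing R] [LinearOrder R] [IsStrictOrderedRing R]

theorem prod_pos_iff_even_length_of_forall_neg {l : List R} (h : ∀ a ∈ l, a < 0) :
    0 < l.prod ↔ Even l.length := by
  have hpos : 0 < (l.map Neg.neg).prod :=
    prod_pos (by simpa using fun a ha => neg_lt_zero.1 (h (-a) ha))
  rw [prod_map_neg] at hpos
  rcases l.length.even_or_odd with he | ho
  · simpa [he, he.neg_one_pow] using hpos
  · rw [ho.neg_one_pow, neg_one_mul, neg_pos] at hpos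
    simpa [Nat.not_even_iff_odd.2 ho] using hpos.le

theorem prod_neg_iff_odd_length_of_forall_neg {l : List R} (h : ∀ a ∈ l, a < 0) :
    l.prod < 0 ↔ Odd l.length := by
  have hne : l.prod ≠ 0 := prod_ne_zero fun h0 => (h 0 h0).false
  rw [← Nat.not_even_iff_odd, ← prod_pos_iff_even_length_of_forall_neg h, not_lt]
  exact ⟨le_of_lt, fun hle => hle.lt_of_ne hne⟩

theorem exists_odd_count_of_prod_map_neg [DecidableEq α] {l : List α} {f : α → R}
    (h : (l.map f).prod < 0) : ∃ x, Odd (l.count x) := by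
  by_contra! heven
  refine h.not_ge ?_
  rw [Finset.prod_list_map_count]
  exact Finset.prod_nonneg fun x _ => (Nat.not_odd_iff_even.1 (heven x)).pow_nonneg _

theorem prod_map_ite_neg [DecidableEq α] {l : List α} {a : α} (ha : Odd (l.count a)) {n p : R}
    (hn : n < 0) (hp : 0 < p) : (l.map fun x => if x = a then n else p).prod < 0 := by
  rw [prod_map_ite, map_const', map_const', prod_replicate, prod_replicate]
  -- the filters by `(· == a)` and by `decide (· = a)` agree definitionally
  rw [count_eq_length_filter] at ha
  exact mul_neg_of_neg_of_pos (ha.pow_neg hn) (pow_pos hp _)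

theorem exists_prod_map_pos_iff {l : List α} {S : Set R} :
    (∃ ν : α → R, (∀ x ∈ l, ν x ∈ S) ∧ 0 < (l.map ν).prod) ↔
      l = [] ∨ (∃ s ∈ S, 0 < s) ∨ ((∃ s ∈ S, s < 0) ∧ Even l.length) := by
  constructor
  · rintro ⟨ν, hνS, hpos⟩
    rcases eq_or_ne l [] with hl | hl
    · exact Or.inl hl
    obtain ⟨x₀, hx₀⟩ := exists_mem_of_ne_nil l hl
    by_cases hν : ∃ x ∈ l, 0 < ν x
    · obtain ⟨x, hx, hνx⟩ := hν
      exact Or.inr (Or.inl ⟨ν x, hνS x hx, hνx⟩)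
    push Not at hν
    have hneg : ∀ a ∈ l.map ν, a < 0 :=
      forall_neg_of_prod_ne_zero_of_forall_nonpos hpos.ne' (by simpa using hν)
    refine Or.inr (Or.inr ⟨⟨ν x₀, hνS x₀ hx₀, hneg _ (mem_map_of_mem hx₀)⟩, ?_⟩)
    simpa using (prod_pos_iff_even_length_of_forall_neg hneg).1 hpos
  · rintro (rfl | ⟨s, hs, hs0⟩ | ⟨⟨s, hs, hs0⟩, he⟩)
    · exact ⟨fun _ => 1, by simp⟩
    · exact ⟨fun _ => s, fun _ _ => hs, by simpa using pow_pos hs0 _⟩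
    · exact ⟨fun _ => s, fun _ _ => hs, by simpa using he.pow_pos hs0.ne⟩

theorem exists_prod_map_neg_iff [DecidableEq α] {l : List α} {S : Set R} :
    (∃ ν : α → R, (∀ x ∈ l, ν x ∈ S) ∧ (l.map ν).prod < 0) ↔
      ((∃ s ∈ S, s < 0) ∧ Odd l.length) ∨
        ((∃ s ∈ S, 0 < s) ∧ (∃ s ∈ S, s < 0) ∧ ∃ x, Odd (l.count x)) := by
  constructor
  · rintro ⟨ν, hνS, hneg⟩
    by_cases hν : ∃ x ∈ l, 0 < ν x
    · obtain ⟨x, hx, hνx⟩ := hν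
      have hνy : ∃ y ∈ l, ν y < 0 := by
        by_contra! h
        exact hneg.not_ge (prod_nonneg (by simpa using h))
      obtain ⟨y, hy, hνy⟩ := hνy
      exact Or.inr ⟨⟨ν x, hνS x hx, hνx⟩, ⟨ν y, hνS y hy, hνy⟩,
        exists_odd_count_of_prod_map_neg hneg⟩
    push Not at hν
    have hneg' : ∀ a ∈ l.map ν, a < 0 :=
      forall_neg_of_prod_ne_zero_of_forall_nonpos hneg.ne (by simpa using hν)
    have hodd : Odd l.length := by
      simpa using (prod_neg_iff_odd_length_of_forall_neg hneg').1 hneg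
    obtain ⟨x₀, hx₀⟩ := exists_mem_of_ne_nil l (ne_nil_of_length_pos hodd.pos)
    exact Or.inl ⟨⟨ν x₀, hνS x₀ hx₀, hneg' _ (mem_map_of_mem hx₀)⟩, hodd⟩
  · rintro (⟨⟨s, hs, hs0⟩, ho⟩ | ⟨⟨p, hp, hp0⟩, ⟨n, hn, hn0⟩, a, ha⟩)
    · exact ⟨fun _ => s, fun _ _ => hs, by simpa using ho.pow_neg hs0⟩
    · refine ⟨fun x => if x = a then n else p, fun x _ => ?_, prod_map_ite_neg ha hn0 hp0⟩
      dsimp only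
      split_ifs <;> assumption

theorem exists_forall_mem_iff_of_subset {l : List α} {V : Set α} {S : Set β}
    (hV : ∀ x ∈ l, x ∈ V) (hS : S.Nonempty) (p : List β → Prop) :
    (∃ ν : α → β, (∀ x ∈ V, ν x ∈ S) ∧ p (l.map ν)) ↔
      ∃ ν : α → β, (∀ x ∈ l, ν x ∈ S) ∧ p (l.map ν) := by
  classical
  refine ⟨fun ⟨ν, hνS, hp⟩ => ⟨ν, fun x hx => hνS x (hV x hx), hp⟩, fun ⟨ν, hνS, hp⟩ => ?_⟩
  refine ⟨fun x => if x ∈ l then ν x else hS.some, fun x _ => ?_, ?_⟩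
  · dsimp only
    split_ifs with hx
    exacts [hνS x hx, hS.some_mem]
  · rwa [map_congr_left fun x hx => if_pos hx]

end List

theorem exists_mul_pos_iff {ι R : Type*} [Ring R] [LinearOrder R] [IsStrictOrderedRing R] (c : R)
    (f : ι → R) (q : ι → Prop) :
    (∃ i, q i ∧ 0 < c * f i) ↔ (0 < c ∧ ∃ i, q i ∧ 0 < f i) ∨ (c < 0 ∧ ∃ i, q i ∧ f i < 0) := by
  constructor
  · rintro ⟨i, hi, h⟩
    rcases mul_pos_iff.1 h with ⟨hc, hf⟩ | ⟨hc, hf⟩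
    exacts [Or.inl ⟨hc, i, hi, hf⟩, Or.inr ⟨hc, i, hi, hf⟩]
  · rintro (⟨hc, i, hi, hf⟩ | ⟨hc, i, hi, hf⟩)
    exacts [⟨i, hi, mul_pos hc hf⟩, ⟨i, hi, mul_pos_of_neg_of_neg hc hf⟩]

theorem product_positive_assignment_iff_general
    (ts : List (ℤ ⊕ ℕ))
    (V : Finset ℕ) (hV : ∀ x : ℕ, Sum.inr x ∈ ts → x ∈ V)
    (S : Finset ℤ) (hS : S.Nonempty)
    (c : ℤ) (hc : c = (ts.filterMap (fun t => Sum.getLeft? t)).prod) :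
    (∃ ν : ℕ → ℤ, (∀ x ∈ V, ν x ∈ S) ∧ 0 < (ts.map (tval ν)).prod) ↔
      ((∀ t ∈ ts, t.isLeft) ∧ 0 < c) ∨
      (0 < c ∧ ∃ s ∈ S, 0 < s) ∨
      (0 < c ∧ (∃ s ∈ S, s < 0) ∧ Even (ts.countP (fun t => t.isRight))) ∨
      (c < 0 ∧ (∃ s ∈ S, s < 0) ∧ Odd (ts.countP (fun t => t.isRight))) ∨
      (c < 0 ∧ (∃ s ∈ S, 0 < s) ∧ (∃ s ∈ S, s < 0) ∧
        ∃ x ∈ V, Odd (ts.count (Sum.inr x))) := by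
  have hvars : ∀ x ∈ ts.filterMap Sum.getRight?, x ∈ V := fun x hx => hV x (by simpa using hx)
  have hodd : (∃ x ∈ V, Odd (ts.count (Sum.inr x))) ↔
      ∃ x, Odd ((ts.filterMap Sum.getRight?).count x) := by
    simp only [← List.count_filterMap_getRight?]
    exact ⟨fun ⟨x, _, hx⟩ => ⟨x, hx⟩,
      fun ⟨x, hx⟩ => ⟨x, hvars x (List.count_pos_iff.1 hx.pos), hx⟩⟩
  rw [hodd]
  simp only [prod_map_tval, ← hc, ← Finset.mem_coe]
  rw [List.exists_forall_mem_iff_of_subset hvars (Finset.coe_nonempty.2 hS)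
      (fun m => 0 < c * m.prod), exists_mul_pos_iff, List.exists_prod_map_pos_iff,
    List.exists_prod_map_neg_iff, ← List.filterMap_getRight?_eq_nil_iff,
    ← List.length_filterMap_getRight?]
  grind

theorem product_positive_assignment_iff
    (ts : List (ℤ ⊕ ℕ)) (hts : ts ≠ [])
    (V : Finset ℕ) (hV : ∀ x : ℕ, Sum.inr x ∈ ts → x ∈ V)
    (S : Finset ℤ) (hS : S.Nonempty)
    (c : ℤ) (hc : c = (ts.filterMap (fun t => Sum.getLeft? t)).prod) :
    (∃ ν : ℕ → ℤ, (∀ x ∈ V, ν x ∈ S) ∧ 0 < (ts.map (tval ν)).prod) ↔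
      ((∀ t ∈ ts, t.isLeft) ∧ 0 < c) ∨
      (0 < c ∧ ∃ s ∈ S, 0 < s) ∨
      (0 < c ∧ (∃ s ∈ S, s < 0) ∧ Even (ts.countP (fun t => t.isRight))) ∨
      (c < 0 ∧ (∃ s ∈ S, s < 0) ∧ Odd (ts.countP (fun t => t.isRight))) ∨
      (c < 0 ∧ (∃ s ∈ S, 0 < s) ∧ (∃ s ∈ S, s < 0) ∧
        ∃ x ∈ V, Odd (ts.count (Sum.inr x))) :=
  product_positive_assignment_iff_general ts V hV S hS c hc
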